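/- Let M be a matroid on a finite ground set E, let v ∈ E with {v} independent in M, and let C be a cocircuit of M with v ∈ C. Set M'' := (M ⧸ {v}) ⧹ (C \ {v}), so that J(M'') = J(M ⧸ {v}) : x_C. Let ℓ ≥ 1 and let S ⊆ E be such that x_S is a minimal squarefree monomial of J(M'')^{(ℓ)}, i.e., x_S ∈ J(M'')^{(ℓ)} and x_{S'} ∉ J(M'')^{(ℓ)} for every proper subset S' ⊊ S. Then S ∩ C = ∅ and x_{S ∪ C} = x_S · x_C is a minimal squarefree monomial of J(M)^{(ℓ+1)}; equivalently, x_S · x_C is a minimal monomial generator of SF_{ℓ+1}(J(M)). -/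

import Mathlib

/-!
A squarefree monomial `x_S` lies in `J(N)^{(ℓ)}` iff `S` meets every basis of `N` in at least
`ℓ` elements, so everything is combinatorics of bases. As `C` is a cocircuit through `v`, some
basis meets `C` exactly in `v`; hence the bases of `M''` are the sets `F` disjoint from `C` with
`F ∪ {v}` a basis of `M`, and then `F ∪ {c}` is a basis of `M` for every `c ∈ C`.
Every basis `F` of `M` can be traded for such an `F' ∪ {v}` at the cost of fewer than `|C ∩ F|`
new elements, which gives `|(S ∪ C) ∩ F| ≥ ℓ + 1`. Conversely, if some `T ⊊ S ∪ C` met every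
basis of `M` in `ℓ + 1` elements, then `T \ C = S` by minimality of `S`; for `c ∈ C \ T` and a
basis `F` of `M''` with `|S ∩ F| ≤ ℓ`, the basis `F ∪ {c}` meets `T` in at most `ℓ` elements.
-/

open Matroid MvPolynomial

/-- The squarefree monomial `x_S = ∏_{i ∈ S} x_i`. -/
noncomputable def xS {α : Type*} [Fintype α] (K : Type*) [Field K] (S : Set α) :
    MvPolynomial α K :=
  ∏ i ∈ S.toFinite.toFinset, MvPolynomial.X i

/-- The monomial `x^γ = ∏ i, x_i ^ γ(i)`. -/
noncomputable def xPow {α : Type*} [Fintype α] (K : Type*) [Field K] (γ : α → ℕ) :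
    MvPolynomial α K :=
  ∏ i : α, (MvPolynomial.X i : MvPolynomial α K) ^ γ i

/-- `p_S`: the ideal of `K[x_i : i ∈ α]` generated by the variables `x_i`, `i ∈ S`. -/
noncomputable def pS {α : Type*} (K : Type*) [Field K] (S : Set α) :
    Ideal (MvPolynomial α K) :=
  Ideal.span (MvPolynomial.X '' S)

/-- The cover ideal `J(M) = ⋂_{F basis of M} p_F` of a matroid `M`. -/
noncomputable def coverIdeal {α : Type*} [Fintype α] (K : Type*) [Field K] (M : Matroid α) :
    Ideal (MvPolynomial α K) :=
  ⨅ F ∈ {F : Set α | M.IsBase F}, pS K F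

/-- The `ℓ`-th symbolic power `J(M)^{(ℓ)} = ⋂_{F basis of M} p_F^ℓ` of the cover ideal. -/
noncomputable def symbPow {α : Type*} [Fintype α] (K : Type*) [Field K] (M : Matroid α)
    (ℓ : ℕ) : Ideal (MvPolynomial α K) :=
  ⨅ F ∈ {F : Set α | M.IsBase F}, (pS K F) ^ ℓ

/-- `SF_ℓ(J(M))`: the ideal generated by the squarefree monomials of `J(M)^{(ℓ)}`, i.e. by the
monomials `x_S` with `|S ∩ F| ≥ ℓ` for every basis `F` of `M`. -/
noncomputable def SF {α : Type*} [Fintype α] (K : Type*) [Field K] (M : Matroid α)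
    (ℓ : ℕ) : Ideal (MvPolynomial α K) :=
  Ideal.span {m : MvPolynomial α K |
    ∃ S : Set α, m = xS K S ∧ ∀ F : Set α, M.IsBase F → ℓ ≤ (S ∩ F).ncard}

/-- Matroid deletion: `M ⧹ D` is the restriction of `M` to `M.E \ D`. -/
def mdel {α : Type*} (M : Matroid α) (D : Set α) : Matroid α := M ↾ (M.E \ D)

/-- Matroid contraction: `M ⧸ C = (M✶ ⧹ C)✶`. -/
def mcon {α : Type*} (M : Matroid α) (C : Set α) : Matroid α := (mdel M✶ C)✶

/-- A cocircuit of `M`: a minimal subset of the ground set meeting every basis of `M`. -/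
def IsCocircuit' {α : Type*} (M : Matroid α) (C : Set α) : Prop :=
  C ⊆ M.E ∧ (∀ F, M.IsBase F → (C ∩ F).Nonempty) ∧
    ∀ C' : Set α, C' ⊂ C → ∃ F, M.IsBase F ∧ C' ∩ F = ∅

def Matroid.IsBaseCover {α : Type*} (M : Matroid α) (ℓ : ℕ) (S : Set α) : Prop :=
  ∀ F, M.IsBase F → ℓ ≤ (S ∩ F).ncard

lemma Matroid.exists_isBase_ncard_inter_le_of_minimal {α : Type*} [Finite α] {N : Matroid α}
    {ℓ : ℕ} {S : Set α} (hS : Minimal (N.IsBaseCover ℓ) S) :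
    ∃ F, N.IsBase F ∧ (S ∩ F).ncard ≤ ℓ := by
  obtain rfl | ⟨s, hs⟩ := S.eq_empty_or_nonempty
  · obtain ⟨F, hF⟩ := N.exists_isBase
    exact ⟨F, hF, by simp⟩
  obtain ⟨F, hF, hlt⟩ : ∃ F, N.IsBase F ∧ ((S \ {s}) ∩ F).ncard < ℓ := by
    simpa [IsBaseCover] using (minimal_iff_forall_lt.1 hS).2 (Set.sdiff_singleton_ssubset.2 hs)
  have hsub : S ∩ F ⊆ insert s ((S \ {s}) ∩ F) := by
    rw [Set.insert_inter_distrib, Set.insert_sdiff_singleton]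
    exact Set.inter_subset_inter (Set.subset_insert _ _) (Set.subset_insert _ _)
  have := (Set.ncard_le_ncard hsub).trans (Set.ncard_insert_le _ _)
  exact ⟨F, hF, by omega⟩

section Monomials

variable {α : Type*} (K : Type*) [Field K]

lemma prod_X_mem_pS_pow {F : Set α} (T : Finset α) (hT : ↑T ⊆ F) :
    (∏ i ∈ T, (X i : MvPolynomial α K)) ∈ pS K F ^ T.card := by
  classical
  induction T using Finset.induction_on with
  | empty => simp
  | insert a T ha ih =>
    rw [Finset.prod_insert ha, Finset.card_insert_of_notMem ha, pow_succ']
    rw [Finset.coe_insert, Set.insert_subset_iff] at hT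
    exact Ideal.mul_mem_mul (Ideal.subset_span ⟨a, hT.1, rfl⟩) (ih hT.2)

lemma map_pS_le_span_X (F : Set α) [DecidablePred (· ∈ F)] :
    (pS K F).map (aeval fun i ↦ if i ∈ F then Polynomial.X else 1) ≤
      Ideal.span {(Polynomial.X : Polynomial K)} := by
  rw [pS, Ideal.map_span, Ideal.span_le]
  rintro _ ⟨_, ⟨i, hi, rfl⟩, rfl⟩
  simp [hi]

variable [Fintype α]

lemma aeval_ite_xS (S F : Set α) [DecidablePred (· ∈ F)] :
    aeval (fun i ↦ if i ∈ F then Polynomial.X else 1) (xS K S) =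
      (Polynomial.X : Polynomial K) ^ (S ∩ F).ncard := by
  rw [xS, map_prod, Set.ncard_eq_toFinset_card _ (S.toFinite.inter_of_left F)]
  simp only [aeval_X]
  rw [Finset.prod_ite, Finset.prod_const_one, mul_one, Finset.prod_const]
  congr 2
  ext i
  simp

lemma xS_mem_pS_pow_iff (S F : Set α) (n : ℕ) :
    xS K S ∈ pS K F ^ n ↔ n ≤ (S ∩ F).ncard := by
  classical
  constructor
  · intro h
    let φ : MvPolynomial α K →ₐ[K] Polynomial K :=
      aeval fun i ↦ if i ∈ F then Polynomial.X else 1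
    have hX := Ideal.pow_right_mono (map_pS_le_span_X K F) n
      (Ideal.map_pow φ (pS K F) n ▸ Ideal.mem_map_of_mem φ h)
    rw [aeval_ite_xS, Ideal.span_singleton_pow, Ideal.mem_span_singleton] at hX
    exact (pow_dvd_pow_iff Polynomial.X_ne_zero Polynomial.not_isUnit_X).1 hX
  · intro h
    rw [Set.ncard_eq_toFinset_card _ (S.toFinite.inter_of_left F)] at h
    obtain ⟨T, hTSF, rfl⟩ := Finset.exists_subset_card_eq h
    have hT : ∀ i ∈ T, i ∈ S ∧ i ∈ F := fun i hi ↦ by simpa using hTSF hi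
    have hTS : T ⊆ S.toFinite.toFinset := fun i hi ↦ by simpa using (hT i hi).1
    rw [xS, ← Finset.prod_sdiff hTS]
    exact Ideal.mul_mem_left _ _ (prod_X_mem_pS_pow K T fun i hi ↦ (hT i hi).2)

lemma xS_mem_symbPow_iff {M : Matroid α} {ℓ : ℕ} {S : Set α} :
    xS K S ∈ symbPow K M ℓ ↔ M.IsBaseCover ℓ S := by
  simp only [symbPow, Ideal.mem_iInf, Set.mem_ofPred_eq, xS_mem_pS_pow_iff, IsBaseCover]

lemma xS_union {S T : Set α} (h : Disjoint S T) : xS K (S ∪ T) = xS K S * xS K T := by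
  classical
  rw [xS, xS, xS, Set.Finite.toFinset_union S.toFinite T.toFinite,
    Finset.prod_union (Set.Finite.disjoint_toFinset.2 h)]

end Monomials

lemma mdel_mcon_eq_delete_contract {α : Type*} (M : Matroid α) (X D : Set α) :
    mdel (mcon M X) D = M ／ X ＼ D := rfl

namespace IsCocircuit'

variable {α : Type*} {M : Matroid α} {C F S T : Set α} {v c : α} {ℓ : ℕ}

lemma exists_isBase_inter_eq_singleton (hC : IsCocircuit' M C) (hv : v ∈ C) :
    ∃ F₀, M.IsBase F₀ ∧ F₀ ∩ C = {v} := by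
  obtain ⟨F₀, hF₀, hF₀C⟩ := hC.2.2 (C \ {v}) (Set.sdiff_singleton_ssubset.2 hv)
  have hunique : ∀ y ∈ F₀ ∩ C, y = v := fun y ⟨hyF₀, hyC⟩ ↦ by
    by_contra hyv
    exact Set.eq_empty_iff_forall_notMem.1 hF₀C y ⟨⟨hyC, hyv⟩, hyF₀⟩
  obtain ⟨x, hxC, hxF₀⟩ := hC.2.1 F₀ hF₀
  obtain rfl := hunique x ⟨hxF₀, hxC⟩
  exact ⟨F₀, hF₀, Set.eq_singleton_iff_unique_mem.2 ⟨⟨hxF₀, hxC⟩, hunique⟩⟩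

lemma isBase_insert_of_isBase_insert (hC : IsCocircuit' M C) (hv : v ∈ C) (hc : c ∈ C)
    (hFC : Disjoint F C) (hB : M.IsBase (insert v F)) : M.IsBase (insert c F) := by
  obtain rfl | hcv := eq_or_ne c v
  · exact hB
  obtain ⟨F₁, hF₁, hF₁C⟩ := hC.2.2 (C \ {c}) (Set.sdiff_singleton_ssubset.2 hc)
  have hvF₁ : v ∉ F₁ := fun h ↦
    Set.eq_empty_iff_forall_notMem.1 hF₁C v ⟨⟨hv, hcv.symm⟩, h⟩
  obtain ⟨f, hf, hfB⟩ := hB.exchange hF₁ ⟨Set.mem_insert v F, hvF₁⟩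
  rw [Set.insert_sdiff_self_of_notMem (hFC.notMem_of_mem_right hv)] at hfB
  -- the base `insert f F` meets `C` but `F` does not, so `f ∈ C ∩ F₁ = {c}`
  obtain ⟨x, hxC, rfl | hxF⟩ := hC.2.1 _ hfB
  · obtain rfl : x = c := by
      by_contra hxc
      exact Set.eq_empty_iff_forall_notMem.1 hF₁C x ⟨⟨hxC, hxc⟩, hf.1⟩
    exact hfB
  · exact absurd hxC (hFC.notMem_of_mem_left hxF)

lemma isBase_contract_delete_iff (hC : IsCocircuit' M C) (hv : v ∈ C) :
    (M ／ {v} ＼ (C \ {v})).IsBase F ↔ Disjoint F C ∧ M.IsBase (insert v F) := by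
  obtain ⟨F₀, hF₀, hF₀C⟩ := hC.exists_isBase_inter_eq_singleton hv
  have hvF₀ : v ∈ F₀ := (hF₀C.symm ▸ rfl : v ∈ F₀ ∩ C).1
  have hvI : M.Indep {v} := hF₀.indep.subset (Set.singleton_subset_iff.2 hvF₀)
  have hcoind : (M ／ {v}).Coindep (C \ {v}) := by
    rw [coindep_iff_exists (Set.sdiff_subset_sdiff_left hC.1)]
    refine ⟨F₀ \ {v}, ?_, ?_⟩
    · simp [hvI.contract_isBase_iff, hvF₀, hF₀]
    · rintro x ⟨hxF₀, hxv⟩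
      refine ⟨⟨hF₀.subset_ground hxF₀, hxv⟩, fun hxC ↦ hxv ?_⟩
      exact (hF₀C ▸ ⟨hxF₀, hxC.1⟩ : x ∈ ({v} : Set α))
  rw [hcoind.delete_isBase_iff, hvI.contract_isBase_iff, Set.union_singleton, and_assoc,
    ← Set.disjoint_union_right, Set.union_sdiff_self,
    Set.union_eq_right.2 (Set.singleton_subset_iff.2 hv), and_comm]

lemma disjoint_of_minimal (hC : IsCocircuit' M C) (hv : v ∈ C)
    (hS : Minimal ((M ／ {v} ＼ (C \ {v})).IsBaseCover ℓ) S) : Disjoint S C := by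
  have hSC : (M ／ {v} ＼ (C \ {v})).IsBaseCover ℓ (S \ C) := fun F hF ↦ by
    have hFC := ((hC.isBase_contract_delete_iff hv).1 hF).1
    rw [Set.sdiff_inter_right_comm, (hFC.mono_left Set.inter_subset_right).sdiff_eq_left]
    exact hS.prop F hF
  exact sdiff_eq_left.1 (hS.eq_of_subset hSC Set.sdiff_subset)

variable [Finite α]

lemma exists_isBase_insert_ncard_sdiff_lt (hC : IsCocircuit' M C) (hv : v ∈ C)
    (hF : M.IsBase F) :
    ∃ G, Disjoint G C ∧ M.IsBase (insert v G) ∧ (G \ F).ncard < (C ∩ F).ncard := by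
  obtain ⟨F₀, hF₀, hF₀C⟩ := hC.exists_isBase_inter_eq_singleton hv
  obtain ⟨B, hB, hFB, hBF⟩ :=
    (hF.indep.subset (Set.sdiff_subset (t := C \ {v}))).exists_isBase_subset_union_isBase hF₀
  have hBC : B ∩ C ⊆ {v} := fun x ⟨hxB, hxC⟩ ↦ by
    rcases hBF hxB with hx | hx
    · by_contra hxv
      exact hx.2 ⟨hxC, hxv⟩
    · exact hF₀C ▸ ⟨hx, hxC⟩
  have hvB : v ∈ B := by
    obtain ⟨x, hxC, hxB⟩ := hC.2.1 B hB
    rwa [← hBC ⟨hxB, hxC⟩]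
  refine ⟨B \ {v}, ?_, by rwa [Set.insert_sdiff_singleton, Set.insert_eq_of_mem hvB], ?_⟩
  · rw [Set.disjoint_left]
    exact fun x hx hxC ↦ hx.2 (hBC ⟨hx.1, hxC⟩)
  have hFB' : F \ B ⊆ C := fun x hx ↦
    by_contra fun hxC ↦ hx.2 (hFB ⟨hx.1, fun h ↦ hxC h.1⟩)
  rw [Nat.lt_iff_add_one_le]
  calc ((B \ {v}) \ F).ncard + 1 = (insert v ((B \ {v}) \ F)).ncard :=
        (Set.ncard_insert_of_notMem (fun h ↦ h.1.2 rfl)).symm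
    _ ≤ (B \ F ∪ {v} ∩ F).ncard := Set.ncard_le_ncard (by
        rintro x (rfl | ⟨⟨hxB, -⟩, hxF⟩)
        · by_cases hxF : x ∈ F
          exacts [Or.inr ⟨rfl, hxF⟩, Or.inl ⟨hvB, hxF⟩]
        · exact Or.inl ⟨hxB, hxF⟩)
    _ ≤ (B \ F).ncard + ({v} ∩ F).ncard := Set.ncard_union_le _ _
    _ = (F \ B).ncard + ({v} ∩ F).ncard := by rw [hB.ncard_sdiff_comm hF]
    _ = (F \ B ∪ {v} ∩ F).ncard := by
        refine (Set.ncard_union_eq (Set.disjoint_left.2 ?_)).symm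
        rintro x hx ⟨rfl, -⟩
        exact hx.2 hvB
    _ ≤ (C ∩ F).ncard := Set.ncard_le_ncard (Set.union_subset
        (Set.subset_inter hFB' Set.sdiff_subset)
        (Set.inter_subset_inter_left _ (Set.singleton_subset_iff.2 hv)))

lemma isBaseCover_union (hC : IsCocircuit' M C) (hv : v ∈ C)
    (hS : (M ／ {v} ＼ (C \ {v})).IsBaseCover ℓ S) (hSC : Disjoint S C) :
    M.IsBaseCover (ℓ + 1) (S ∪ C) := by
  intro F hF
  obtain ⟨G, hGC, hG, hGF⟩ := hC.exists_isBase_insert_ncard_sdiff_lt hv hF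
  have hSG : S ∩ G ⊆ (S ∩ F) ∪ (G \ F) := fun x ⟨hxS, hxG⟩ ↦ by
    by_cases hxF : x ∈ F
    exacts [Or.inl ⟨hxS, hxF⟩, Or.inr ⟨hxG, hxF⟩]
  calc ℓ + 1 ≤ (S ∩ G).ncard + 1 := by
        gcongr
        exact hS G ((hC.isBase_contract_delete_iff hv).2 ⟨hGC, hG⟩)
    _ ≤ (S ∩ F).ncard + (G \ F).ncard + 1 := by
        gcongr
        exact (Set.ncard_le_ncard hSG).trans (Set.ncard_union_le _ _)
    _ ≤ (S ∩ F).ncard + (C ∩ F).ncard := by omega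
    _ = ((S ∪ C) ∩ F).ncard := by
        rw [Set.union_inter_distrib_right,
          Set.ncard_union_eq (hSC.mono Set.inter_subset_left Set.inter_subset_left)]

lemma isBaseCover_contract_delete_sdiff (hC : IsCocircuit' M C) (hv : v ∈ C)
    (hT : M.IsBaseCover (ℓ + 1) T) : (M ／ {v} ＼ (C \ {v})).IsBaseCover ℓ (T \ C) := by
  intro F hF
  rw [hC.isBase_contract_delete_iff hv] at hF
  have hsub : T ∩ insert v F ⊆ insert v ((T \ C) ∩ F) := by
    rintro x ⟨hxT, rfl | hxF⟩
    · exact Set.mem_insert _ _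
    · exact Set.mem_insert_of_mem _ ⟨⟨hxT, hF.1.notMem_of_mem_left hxF⟩, hxF⟩
  have := (hT _ hF.2).trans ((Set.ncard_le_ncard hsub).trans (Set.ncard_insert_le _ _))
  omega

lemma minimal_isBaseCover_union (hC : IsCocircuit' M C) (hv : v ∈ C)
    (hS : Minimal ((M ／ {v} ＼ (C \ {v})).IsBaseCover ℓ) S) :
    Minimal (M.IsBaseCover (ℓ + 1)) (S ∪ C) := by
  have hSC := hC.disjoint_of_minimal hv hS
  refine minimal_iff_forall_lt.2 ⟨hC.isBaseCover_union hv hS.prop hSC, fun T hT hTcov ↦ ?_⟩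
  have hTS : T \ C = S := hS.eq_of_subset (hC.isBaseCover_contract_delete_sdiff hv hTcov)
    fun x hx ↦ (hT.1 hx.1).resolve_right hx.2
  obtain ⟨c, hcSC, hcT⟩ := Set.exists_of_ssubset hT
  have hcC : c ∈ C := hcSC.resolve_left fun hcS ↦ hcT (hTS.symm ▸ hcS : c ∈ T \ C).1
  obtain ⟨F, hF, hSF⟩ := exists_isBase_ncard_inter_le_of_minimal hS
  rw [hC.isBase_contract_delete_iff hv] at hF
  have hsub : T ∩ insert c F ⊆ S ∩ F := by
    rintro x ⟨hxT, rfl | hxF⟩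
    · exact absurd hxT hcT
    · exact ⟨hTS ▸ ⟨hxT, hF.1.notMem_of_mem_left hxF⟩, hxF⟩
  have := (hTcov _ (hC.isBase_insert_of_isBase_insert hv hcC hF.1 hF.2)).trans
    ((Set.ncard_le_ncard hsub).trans hSF)
  omega

end IsCocircuit'

theorem stmt16_general {α : Type*} [Fintype α] (K : Type*) [Field K]
    (M : Matroid α) (v : α) (C : Set α) (hC : IsCocircuit' M C) (hv : v ∈ C)
    (ℓ : ℕ) (S : Set α)
    (hmem : xS K S ∈ symbPow K (mdel (mcon M {v}) (C \ {v})) ℓ)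
    (hmin : ∀ S' : Set α, S' ⊂ S →
      xS K S' ∉ symbPow K (mdel (mcon M {v}) (C \ {v})) ℓ) :
    S ∩ C = ∅ ∧
    xS K (S ∪ C) = xS K S * xS K C ∧
    xS K (S ∪ C) ∈ symbPow K M (ℓ + 1) ∧
    ∀ T : Set α, T ⊂ S ∪ C → xS K T ∉ symbPow K M (ℓ + 1) := by
  simp only [mdel_mcon_eq_delete_contract, xS_mem_symbPow_iff] at hmem hmin
  have hS : Minimal ((M ／ {v} ＼ (C \ {v})).IsBaseCover ℓ) S :=
    minimal_iff_forall_lt.2 ⟨hmem, hmin⟩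
  have hSC := hC.disjoint_of_minimal hv hS
  obtain ⟨hcov, hcov_min⟩ := minimal_iff_forall_lt.1 (hC.minimal_isBaseCover_union hv hS)
  simp only [xS_mem_symbPow_iff]
  exact ⟨hSC.inter_eq, xS_union K hSC, hcov, fun T hT ↦ hcov_min hT⟩

/-- let `v` be an element with `{v}` independent, `C` a cocircuit with `v ∈ C`,
`M'' = (M ⧸ {v}) ⧹ (C \ {v})`, `ℓ ≥ 1`, and `S` a set such that `x_S` is a minimal squarefree
monomial of `J(M'')^{(ℓ)}`. Then `S ∩ C = ∅`, `x_{S ∪ C} = x_S · x_C`, and `x_{S ∪ C}` is a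
minimal squarefree monomial of `J(M)^{(ℓ+1)}`. -/
theorem stmt16 {α : Type*} [Fintype α] (K : Type*) [Field K]
    (M : Matroid α) (hE : M.E = Set.univ)
    (v : α) (hvind : M.Indep {v})
    (C : Set α) (hC : IsCocircuit' M C) (hv : v ∈ C)
    (ℓ : ℕ) (hℓ : 1 ≤ ℓ) (S : Set α)
    (hmem : xS K S ∈ symbPow K (mdel (mcon M {v}) (C \ {v})) ℓ)
    (hmin : ∀ S' : Set α, S' ⊂ S →
      xS K S' ∉ symbPow K (mdel (mcon M {v}) (C \ {v})) ℓ) :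
    S ∩ C = ∅ ∧
    xS K (S ∪ C) = xS K S * xS K C ∧
    xS K (S ∪ C) ∈ symbPow K M (ℓ + 1) ∧
    ∀ T : Set α, T ⊂ S ∪ C → xS K T ∉ symbPow K M (ℓ + 1) :=
  stmt16_general K M v C hC hv ℓ S hmem hmin
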